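/- arXiv:1010.5908 — 5 statements merged into one kernel-verified Lean document; each statement's English description precedes it below -/
import Mathlib

section
/- Let δ > 0 and δ/2 < a ≤ δ. Let P₀ = (0,0), A = (a,0), P = (x,y), and Q = (x₁,y₁), all with first coordinates in [0,δ] and nonnegative second coordinates. Suppose d₁(A,P) ≥ δ, d₁(A,Q) ≥ δ, d₁(P,Q) ≥ δ, d₁(P₀,P) < d₁(P₀,A), and y₁ ≤ y. Then x₁ > δ or x₁ < 0 (contradiction with Q being in the slab); hence no point of the slab distinct from A can lie weakly below P while also being δ-separated from A and P, when P is strictly closer to P₀ than A. -/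
/-- Manhattan (ℓ¹) distance on ℝ². -/
def d1 (p q : ℝ × ℝ) : ℝ := |p.1 - q.1| + |p.2 - q.2|

/-! Since `|x| + |y| < a`, the point `P` lies inside the ℓ¹-ball of radius `a ≤ δ` about `P₀`.
If `Q` is left of `P`, it is south-west of `P`, and `d₁(P, Q) ≥ δ` forces
`x₁ ≤ x + y - y₁ - δ < 0`. If `Q` is right of `A`, it is north-east of `A`, and `d₁(A, Q) ≥ δ`
forces `x₁ ≥ a + δ - y₁ > δ` because `y₁ ≤ y < a`. Otherwise `x ≤ x₁ < a`, and adding the two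
separation conditions gives `y - x ≥ 2δ - a ≥ a`, contradicting `|x| + |y| < a`. -/

theorem d1_comm (p q : ℝ × ℝ) : d1 p q = d1 q p := by
  simp only [d1, abs_sub_comm]

theorem d1_zero_left (p : ℝ × ℝ) : d1 (0, 0) p = |p.1| + |p.2| := by
  simp [d1]

theorem d1_eq_of_le_of_le {x y x' y' : ℝ} (h₁ : x' ≤ x) (h₂ : y' ≤ y) :
    d1 (x, y) (x', y') = (x - x') + (y - y') := by
  rw [d1, abs_of_nonneg (sub_nonneg.2 h₁), abs_of_nonneg (sub_nonneg.2 h₂)]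

theorem d1_eq_of_le_of_ge {x y x' y' : ℝ} (h₁ : x' ≤ x) (h₂ : y ≤ y') :
    d1 (x, y) (x', y') = (x - x') + (y' - y) := by
  rw [d1, abs_of_nonneg (sub_nonneg.2 h₁), abs_of_nonpos (sub_nonpos.2 h₂), neg_sub]

theorem stmt_3_general (δ a x y x₁ y₁ : ℝ)
    (ha1 : δ / 2 < a) (ha2 : a ≤ δ)
    (hy1 : 0 ≤ y₁)
    (hAQ : d1 (a, 0) (x₁, y₁) ≥ δ)
    (hPQ : d1 (x, y) (x₁, y₁) ≥ δ)
    (hP : d1 (0, 0) (x, y) < d1 (0, 0) (a, 0))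
    (hyy : y₁ ≤ y) :
    x₁ > δ ∨ x₁ < 0 := by
  have ha : 0 < a := by linarith
  have hxy : |x| + |y| < a := by simpa [d1_zero_left, abs_of_pos ha] using hP
  have hsum : x + y < a := by linarith [le_abs_self x, le_abs_self y]
  have hdiff : y - x < a := by linarith [neg_abs_le x, le_abs_self y]
  have hya : y < a := by linarith [abs_nonneg x, le_abs_self y]
  rcases lt_or_ge x₁ x with hx₁x | hxx₁
  · rw [d1_eq_of_le_of_le hx₁x.le hyy] at hPQ
    right
    linarith
  rcases le_or_gt a x₁ with hax₁ | hx₁a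
  · rw [d1_comm, d1_eq_of_le_of_le hax₁ hy1] at hAQ
    left
    linarith
  rw [d1_eq_of_le_of_ge hx₁a.le hy1] at hAQ
  rw [d1_comm, d1_eq_of_le_of_ge hxx₁ hyy] at hPQ
  linarith

theorem stmt_3 (δ a x y x₁ y₁ : ℝ) (hδ : 0 < δ)
    (ha1 : δ / 2 < a) (ha2 : a ≤ δ)
    (hx0 : 0 ≤ x) (hxδ : x ≤ δ) (hy : 0 ≤ y)
    (hx10 : 0 ≤ x₁) (hx1δ : x₁ ≤ δ) (hy1 : 0 ≤ y₁)
    (hAP : d1 (a, 0) (x, y) ≥ δ)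
    (hAQ : d1 (a, 0) (x₁, y₁) ≥ δ)
    (hPQ : d1 (x, y) (x₁, y₁) ≥ δ)
    (hP : d1 (0, 0) (x, y) < d1 (0, 0) (a, 0))
    (hyy : y₁ ≤ y) :
    x₁ > δ ∨ x₁ < 0 :=
  stmt_3_general δ a x y x₁ y₁ ha1 ha2 hy1 hAQ hPQ hP hyy
end

section
/- Let δ > 0 and let S be a finite set of points in the half-slab [0,δ]×ℝ such that any two distinct points of S are at ℓ¹ distance at least δ. Let P₀ = (0,0), and suppose every point of S has nonnegative y-coordinate. Order S by y-coordinate (ties broken arbitrarily). Then a point of S minimizing the ℓ¹ distance to P₀ is among the first two points in this ordering. -/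
/-!
Among the points of `S` nearest to `P₀` (those minimising `x + y`) pick the lowest one, `p`.
Every point of `S` strictly below `p` then lies strictly farther from `P₀` than `p` does,
hence strictly to the right of `p`. Two such points `q, r` would be squeezed into the box
`[p.1, δ] × [0, p.2)`, and `δ`-separation from `p` and from each other is impossible there.
-/

lemma d1_origin_eq_add {q : ℝ × ℝ} (hx : 0 ≤ q.1) (hy : 0 ≤ q.2) :
    d1 (0, 0) q = q.1 + q.2 := by
  simp only [d1, zero_sub, abs_neg, abs_of_nonneg hx, abs_of_nonneg hy]

lemma d1_lt_of_below_of_farther {δ : ℝ} {p q r : ℝ × ℝ} (hp : 0 ≤ p.1)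
    (hq : q.1 ≤ δ) (hr : r.1 ≤ δ) (hqp : q.2 < p.2) (hrp : r.2 < p.2)
    (hpq : p.1 + p.2 < q.1 + q.2) (hpr : p.1 + p.2 < r.1 + r.2)
    (dpq : δ ≤ d1 p q) (dpr : δ ≤ d1 p r) : d1 q r < δ := by
  unfold d1 at *
  rw [abs_of_neg (by linarith : p.1 - q.1 < 0), abs_of_pos (by linarith : 0 < p.2 - q.2)] at dpq
  rw [abs_of_neg (by linarith : p.1 - r.1 < 0), abs_of_pos (by linarith : 0 < p.2 - r.2)] at dpr
  rcases abs_cases (q.1 - r.1) with ⟨h1, -⟩ | ⟨h1, -⟩ <;>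
    rcases abs_cases (q.2 - r.2) with ⟨h2, -⟩ | ⟨h2, -⟩ <;> rw [h1, h2] <;> linarith

theorem stmt_4_general (δ : ℝ) (S : Finset (ℝ × ℝ))
    (hslab : ∀ p ∈ S, 0 ≤ p.1 ∧ p.1 ≤ δ)
    (habove : ∀ p ∈ S, 0 ≤ p.2)
    (hsparse : ∀ p ∈ S, ∀ q ∈ S, p ≠ q → d1 p q ≥ δ)
    (hne : S.Nonempty) :
    ∃ p ∈ S, (∀ q ∈ S, d1 (0, 0) p ≤ d1 (0, 0) q) ∧
      (S.filter (fun q => q.2 < p.2)).card ≤ 1 := by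
  obtain ⟨p, hpS, hpmin⟩ := S.exists_min_image (fun q => toLex (q.1 + q.2, q.2)) hne
  have hd1 : ∀ q ∈ S, d1 (0, 0) q = q.1 + q.2 := fun q hq =>
    d1_origin_eq_add (hslab q hq).1 (habove q hq)
  have hfarther : ∀ q ∈ S, q.2 < p.2 → p.1 + p.2 < q.1 + q.2 := fun q hq hqp => by
    rcases Prod.Lex.le_iff.mp (hpmin q hq) with h | ⟨-, h⟩
    · exact h
    · exact absurd h (not_le.mpr hqp)
  refine ⟨p, hpS, fun q hq => ?_, Finset.card_le_one.mpr fun q hq r hr => ?_⟩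
  · rw [hd1 p hpS, hd1 q hq]
    exact (Prod.Lex.le_iff.mp (hpmin q hq)).elim le_of_lt (fun h => h.1.le)
  · rw [Finset.mem_filter] at hq hr
    by_contra hqr
    have hpq := hsparse p hpS q hq.1 (ne_of_apply_ne Prod.snd hq.2.ne')
    have hpr := hsparse p hpS r hr.1 (ne_of_apply_ne Prod.snd hr.2.ne')
    exact (d1_lt_of_below_of_farther (hslab p hpS).1 (hslab q hq.1).2 (hslab r hr.1).2 hq.2 hr.2
      (hfarther q hq.1 hq.2) (hfarther r hr.1 hr.2) hpq hpr).not_ge (hsparse q hq.1 r hr.1 hqr)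

theorem stmt_4 (δ : ℝ) (hδ : 0 < δ) (S : Finset (ℝ × ℝ))
    (hslab : ∀ p ∈ S, 0 ≤ p.1 ∧ p.1 ≤ δ)
    (habove : ∀ p ∈ S, 0 ≤ p.2)
    (hsparse : ∀ p ∈ S, ∀ q ∈ S, p ≠ q → d1 p q ≥ δ)
    (hne : S.Nonempty) :
    ∃ p ∈ S, (∀ q ∈ S, d1 (0, 0) p ≤ d1 (0, 0) q) ∧
      (S.filter (fun q => q.2 < p.2)).card ≤ 1 :=
  stmt_4_general δ S hslab habove hsparse hne
end

section
/- Let δ > 0 and let S be a finite set of points in [0,δ]×[0,∞) such that any two distinct points of S are at Euclidean distance at least δ. Let P₀ = (0,0). Then a point of S minimizing the Euclidean distance to P₀ is among the two points of S with smallest y-coordinates. -/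
/-!
Let `p = (a, h)` be a point of `S` closest to the origin. A point `(c, z)` of `S` lying below `p`
is no closer to the origin, which forces `h - z ≤ c`. Suppose `q = (b, y)` and `r = (c, z)` both
lie below `p`, with `z ≤ y`. If `c < b`, then `q - r` lies in the rectangle `[0, δ - c] × [0, c)`,
whose diagonal is shorter than `δ`. If `b ≤ c`, then the point `(b, h - y)` of `(0, δ]²` is at
distance at least `δ` from `(0, 0)` (since `|p - q| ≥ δ`) and from `(δ, δ)` (since `|q - r| ≥ δ`),
which only the corners of the square manage.
-/

/-- Euclidean (ℓ²) distance on ℝ². -/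
noncomputable def d2 (p q : ℝ × ℝ) : ℝ := Real.sqrt ((p.1 - q.1) ^ 2 + (p.2 - q.2) ^ 2)

def sqDist (p q : ℝ × ℝ) : ℝ := (p.1 - q.1) ^ 2 + (p.2 - q.2) ^ 2

lemma sqDist_nonneg (p q : ℝ × ℝ) : 0 ≤ sqDist p q := by unfold sqDist; positivity

lemma sq_le_sqDist_of_le_d2 {δ : ℝ} {p q : ℝ × ℝ} (hδ : 0 ≤ δ) (h : δ ≤ d2 p q) :
    δ ^ 2 ≤ sqDist p q :=
  (Real.le_sqrt hδ (sqDist_nonneg p q)).1 h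

lemma d2_le_d2_iff {o p q : ℝ × ℝ} : d2 o p ≤ d2 o q ↔ sqDist o p ≤ sqDist o q :=
  Real.sqrt_le_sqrt_iff (sqDist_nonneg o q)

lemma sub_le_of_sq_add_sq_le {a h c z : ℝ} (hz : 0 ≤ z) (hzh : z ≤ h) (hc : 0 ≤ c)
    (hle : a ^ 2 + h ^ 2 ≤ c ^ 2 + z ^ 2) : h - z ≤ c := by
  have hsq : (h - z) ^ 2 ≤ c ^ 2 := by nlinarith [sq_nonneg a]
  exact (pow_le_pow_iff_left₀ (by linarith) hc two_ne_zero).1 hsq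

lemma false_of_far_from_opposite_corners {δ b t : ℝ} (hb : 0 < b) (hbδ : b ≤ δ)
    (ht : 0 < t) (htδ : t ≤ δ) (h₀ : δ ^ 2 ≤ b ^ 2 + t ^ 2)
    (h₁ : δ ^ 2 ≤ (δ - b) ^ 2 + (δ - t) ^ 2) : False := by
  have hb' := mul_nonneg hb.le (sub_nonneg.2 hbδ)
  have ht' := mul_nonneg ht.le (sub_nonneg.2 htδ)
  have hsum : b * (δ - b) + t * (δ - t) ≤ 0 := by nlinarith
  have hbeq : δ - b = 0 := (mul_eq_zero.1 (by linarith : b * (δ - b) = 0)).resolve_left hb.ne'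
  have hteq : δ - t = 0 := (mul_eq_zero.1 (by linarith : t * (δ - t) = 0)).resolve_left ht.ne'
  rw [hbeq, hteq] at h₁
  nlinarith

lemma false_of_two_below_closest {δ : ℝ} {p q r : ℝ × ℝ}
    (hp : 0 ≤ p.1) (hq : 0 ≤ q.1 ∧ q.1 ≤ δ) (hr : 0 ≤ r.1 ∧ r.1 ≤ δ ∧ 0 ≤ r.2)
    (hrq : r.2 ≤ q.2) (hqp : q.2 < p.2)
    (hpq : sqDist (0, 0) p ≤ sqDist (0, 0) q) (hpr : sqDist (0, 0) p ≤ sqDist (0, 0) r)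
    (hδpq : δ ^ 2 ≤ sqDist p q) (hδqr : δ ^ 2 ≤ sqDist q r) : False := by
  obtain ⟨a, h⟩ := p
  obtain ⟨b, y⟩ := q
  obtain ⟨c, z⟩ := r
  obtain ⟨hb, hbδ⟩ := hq
  obtain ⟨hc, hcδ, hz⟩ := hr
  simp only [sqDist, zero_sub, neg_sq] at *
  have hhz : h - z ≤ c := sub_le_of_sq_add_sq_le hz (hrq.trans hqp.le) hc hpr
  rcases lt_or_ge c b with hcb | hbc
  · have hx : (b - c) ^ 2 ≤ (δ - c) ^ 2 := pow_le_pow_left₀ (by linarith) (by linarith) 2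
    have hy : (y - z) ^ 2 < c ^ 2 := pow_lt_pow_left₀ (by linarith) (by linarith) two_ne_zero
    linarith [mul_nonneg hc (sub_nonneg.2 hcδ)]
  · have hab : a < b := by nlinarith
    have hx : (c - b) ^ 2 ≤ (δ - b) ^ 2 := pow_le_pow_left₀ (by linarith) (by linarith) 2
    have hy : (y - z) ^ 2 ≤ (δ - (h - y)) ^ 2 := pow_le_pow_left₀ (by linarith) (by linarith) 2
    have hab' : (a - b) ^ 2 ≤ b ^ 2 := by nlinarith
    exact false_of_far_from_opposite_corners (hp.trans_lt hab) hbδ (sub_pos.2 hqp)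
      (by linarith) (by linarith) (by linarith)

theorem stmt_5 (δ : ℝ) (hδ : 0 < δ) (S : Finset (ℝ × ℝ))
    (hslab : ∀ p ∈ S, 0 ≤ p.1 ∧ p.1 ≤ δ ∧ 0 ≤ p.2)
    (hsparse : ∀ p ∈ S, ∀ q ∈ S, p ≠ q → d2 p q ≥ δ)
    (hne : S.Nonempty) :
    ∃ p ∈ S, (∀ q ∈ S, d2 (0, 0) p ≤ d2 (0, 0) q) ∧
      (S.filter (fun q => q.2 < p.2)).card ≤ 1 := by
  obtain ⟨p, hpS, hpmin⟩ := S.exists_min_image (d2 (0, 0)) hne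
  refine ⟨p, hpS, hpmin, Finset.card_le_one.2 fun q hq r hr => ?_⟩
  by_contra hqr
  obtain ⟨hqS, hqp⟩ := Finset.mem_filter.1 hq
  obtain ⟨hrS, hrp⟩ := Finset.mem_filter.1 hr
  have hsep {u v} (hu : u ∈ S) (hv : v ∈ S) (huv : u ≠ v) : δ ^ 2 ≤ sqDist u v :=
    sq_le_sqDist_of_le_d2 hδ.le (hsparse u hu v hv huv)
  have hclosest {v} (hv : v ∈ S) : sqDist (0, 0) p ≤ sqDist (0, 0) v := d2_le_d2_iff.1 (hpmin v hv)
  have hpq : p ≠ q := by rintro rfl; exact hqp.false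
  have hpr : p ≠ r := by rintro rfl; exact hrp.false
  have hp := (hslab p hpS).1
  obtain ⟨hq₁, hq₂, hq₃⟩ := hslab q hqS
  obtain ⟨hr₁, hr₂, hr₃⟩ := hslab r hrS
  rcases le_total r.2 q.2 with hrq | hqr'
  · exact false_of_two_below_closest hp ⟨hq₁, hq₂⟩ ⟨hr₁, hr₂, hr₃⟩ hrq hqp
      (hclosest hqS) (hclosest hrS) (hsep hpS hqS hpq) (hsep hqS hrS hqr)
  · exact false_of_two_below_closest hp ⟨hr₁, hr₂⟩ ⟨hq₁, hq₂, hq₃⟩ hqr' hrp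
      (hclosest hrS) (hclosest hqS) (hsep hpS hrS hpr) (hsep hrS hqS (Ne.symm hqr))
end

section
/- Let δ > 0 and let S be a finite set of points in the half-slab [0,δ]×ℝ that are pairwise at ℓ¹ distance at least δ. Let P₀ = (0, y₀) be any point with x-coordinate 0, and let S' = {p ∈ S : y-coordinate of p ≥ y₀}. Then at most two points of S' lie within ℓ¹ distance strictly less than δ of P₀. -/
/-!
Rotating the plane by 45°, the ℓ¹ distance becomes the ℓ^∞ distance in the coordinates
`x + y` and `x - y`. After translating `P₀` to the origin, the points of `S'` close to `P₀` lie in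
the triangle `x, y ≥ 0`, `x + y < δ`, where `x + y` varies by less than `δ` and `x - y` ranges
over an interval of length `2δ`. Two such points at distance `≥ δ` are therefore `δ` apart in
`x - y`, and an open interval of length `2δ` has no room for three such values.
-/

lemma abs_add_abs_eq_max_abs_add_abs_sub {α : Type*} [AddCommGroup α] [LinearOrder α]
    [IsOrderedAddMonoid α] (a b : α) : |a| + |b| = max |a + b| |a - b| := by
  refine le_antisymm ?_ (max_le (abs_add_le a b) (abs_sub a b))
  rcases le_total 0 a with ha | ha <;> rcases le_total 0 b with hb | hb
  · exact le_max_of_le_left ((abs_add_eq_add_abs_iff a b).2 (.inl ⟨ha, hb⟩)).ge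
  · refine le_max_of_le_right ?_
    rw [sub_eq_add_neg, (abs_add_eq_add_abs_iff a (-b)).2 (.inl ⟨ha, neg_nonneg.2 hb⟩), abs_neg]
  · refine le_max_of_le_right ?_
    rw [sub_eq_add_neg, (abs_add_eq_add_abs_iff a (-b)).2 (.inr ⟨ha, neg_nonpos.2 hb⟩), abs_neg]
  · exact le_max_of_le_left ((abs_add_eq_add_abs_iff a b).2 (.inr ⟨ha, hb⟩)).ge

lemma d1_eq_max (p q : ℝ × ℝ) :
    d1 p q = max |(p.1 + p.2) - (q.1 + q.2)| |(p.1 - p.2) - (q.1 - q.2)| := by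
  rw [d1, abs_add_abs_eq_max_abs_add_abs_sub]
  congr 2 <;> ring

lemma not_three_le_abs_sub_of_abs_sub_lt {α : Type*} [Field α] [LinearOrder α]
    [IsStrictOrderedRing α] {a b c m δ : α}
    (ha : |a - m| < δ) (hb : |b - m| < δ) (hc : |c - m| < δ)
    (hab : δ ≤ |a - b|) (hac : δ ≤ |a - c|) (hbc : δ ≤ |b - c|) : False := by
  rw [abs_sub_lt_iff] at ha hb hc
  rw [le_abs] at hab hac hbc
  rcases hab with hab | hab <;> rcases hac with hac | hac <;> rcases hbc with hbc | hbc <;>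
  linarith

def cornerTriangle (y₀ δ : ℝ) : Set (ℝ × ℝ) := {p | 0 ≤ p.1 ∧ y₀ ≤ p.2 ∧ d1 (0, y₀) p < δ}

section Corner

variable {δ y₀ : ℝ} {p q : ℝ × ℝ}

lemma d1_corner_eq (hx : 0 ≤ p.1) (hy : y₀ ≤ p.2) : d1 (0, y₀) p = p.1 + (p.2 - y₀) := by
  rw [d1, zero_sub, abs_neg, abs_of_nonneg hx, abs_sub_comm, abs_of_nonneg (sub_nonneg.2 hy)]

lemma abs_sub_sub_lt_of_mem_cornerTriangle (hp : p ∈ cornerTriangle y₀ δ) :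
    |(p.1 - p.2) - -y₀| < δ := by
  obtain ⟨hx, hy, hd⟩ := hp
  rw [d1_corner_eq hx hy] at hd
  rw [abs_sub_lt_iff]
  constructor <;> linarith

lemma le_abs_sub_sub_of_le_d1 (hp : p ∈ cornerTriangle y₀ δ) (hq : q ∈ cornerTriangle y₀ δ)
    (h : δ ≤ d1 p q) : δ ≤ |(p.1 - p.2) - (q.1 - q.2)| := by
  obtain ⟨hpx, hpy, hpd⟩ := hp
  obtain ⟨hqx, hqy, hqd⟩ := hq
  rw [d1_corner_eq hpx hpy] at hpd
  rw [d1_corner_eq hqx hqy] at hqd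
  have hsum : |(p.1 + p.2) - (q.1 + q.2)| < δ := by
    rw [abs_sub_lt_iff]
    constructor <;> linarith
  rw [d1_eq_max] at h
  exact (le_max_iff.1 h).resolve_left hsum.not_ge

end Corner

theorem stmt_10_general (δ : ℝ) (S : Finset (ℝ × ℝ))
    (hslab : ∀ p ∈ S, 0 ≤ p.1 ∧ p.1 ≤ δ)
    (hsparse : ∀ p ∈ S, ∀ q ∈ S, p ≠ q → d1 p q ≥ δ)
    (y₀ : ℝ) :
    (S.filter (fun p => y₀ ≤ p.2 ∧ d1 (0, y₀) p < δ)).card ≤ 2 := by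
  set T := S.filter (fun p => y₀ ≤ p.2 ∧ d1 (0, y₀) p < δ)
  have hT : ∀ u ∈ T, u ∈ S ∧ u ∈ cornerTriangle y₀ δ := fun u hu =>
    have ⟨huS, hu⟩ := Finset.mem_filter.1 hu
    ⟨huS, (hslab u huS).1, hu⟩
  have separated {u v} (hu : u ∈ T) (hv : v ∈ T) (huv : u ≠ v) :=
    le_abs_sub_sub_of_le_d1 (hT u hu).2 (hT v hv).2 (hsparse u (hT u hu).1 v (hT v hv).1 huv)
  have near {u} (hu : u ∈ T) := abs_sub_sub_lt_of_mem_cornerTriangle (hT u hu).2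
  by_contra! h
  obtain ⟨p, q, r, hp, hq, hr, hpq, hpr, hqr⟩ := Finset.two_lt_card_iff.mp h
  exact not_three_le_abs_sub_of_abs_sub_lt (near hp) (near hq) (near hr)
    (separated hp hq hpq) (separated hp hr hpr) (separated hq hr hqr)

theorem stmt_10 (δ : ℝ) (hδ : 0 < δ) (S : Finset (ℝ × ℝ))
    (hslab : ∀ p ∈ S, 0 ≤ p.1 ∧ p.1 ≤ δ)
    (hsparse : ∀ p ∈ S, ∀ q ∈ S, p ≠ q → d1 p q ≥ δ)
    (y₀ : ℝ) :
    (S.filter (fun p => y₀ ≤ p.2 ∧ d1 (0, y₀) p < δ)).card ≤ 2 :=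
  stmt_10_general δ S hslab hsparse y₀
end

section
/- Let δ > 0 and let S be a finite set of points in [0,δ]×[0,∞), pairwise at ℓ¹ distance at least δ, let P₀ = (0,0), and let A be the lowest point of S. If P ∈ S satisfies d₁(P₀,P) < d₁(P₀,A), then P is the second-lowest point of S, that is, no point Q ∈ S \ {A, P} has y-coordinate ≤ the y-coordinate of P. -/
theorem stmt_13 (δ : ℝ) (hδ : 0 < δ) (S : Finset (ℝ × ℝ))
    (hslab : ∀ p ∈ S, 0 ≤ p.1 ∧ p.1 ≤ δ ∧ 0 ≤ p.2)
    (hsparse : ∀ p ∈ S, ∀ q ∈ S, p ≠ q → d1 p q ≥ δ)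
    (A : ℝ × ℝ) (hA : A ∈ S) (hAlow : ∀ q ∈ S, A.2 ≤ q.2)
    (P : ℝ × ℝ) (hP : P ∈ S)
    (hcloser : d1 (0, 0) P < d1 (0, 0) A) :
    ∀ Q ∈ S, Q ≠ A → Q ≠ P → ¬ (Q.2 ≤ P.2) := by
  intro Q hQ hQA hQP hQy
  obtain ⟨hA1, hA2, hA3⟩ := hslab A hA
  obtain ⟨hP1, hP2, hP3⟩ := hslab P hP
  obtain ⟨hQ1, hQ2, hQ3⟩ := hslab Q hQ
  have h1 := hsparse Q hQ A hA hQA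
  have h2 := hsparse Q hQ P hP hQP
  have hAQ := hAlow Q hQ
  have hAP := hAlow P hP
  simp only [d1] at h1 h2 hcloser
  simp only [zero_sub, abs_neg] at hcloser
  rw [abs_of_nonneg hP1, abs_of_nonneg hP3, abs_of_nonneg hA1, abs_of_nonneg hA3] at hcloser
  rw [abs_of_nonneg (by linarith : (0:ℝ) ≤ Q.2 - A.2)] at h1
  rw [abs_of_nonpos (by linarith : Q.2 - P.2 ≤ 0)] at h2
  rcases abs_cases (Q.1 - A.1) with ⟨e1, _⟩ | ⟨e1, _⟩ <;>
  rcases abs_cases (Q.1 - P.1) with ⟨e2, _⟩ | ⟨e2, _⟩ <;>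
  simp only [e1, e2] at h1 h2 <;> linarith
end
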